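/- arXiv:2101.09195 — 9 statements merged into one kernel-verified Lean document; each statement's English description precedes it below -/
import Mathlib

section
/- The statistic t(z, y) = Σ_{i=1}^n z_i ψ_{1i}(y_i) − Σ_{i=1}^n (1−z_i) ψ_{0i}(y_i), where each ψ_{1i}, ψ_{0i} : ℝ → ℝ is monotone increasing, is differential increasing: for all z, a ∈ {0,1}^n and y, η ∈ ℝ^n with η ≥ 0 coordinatewise, t(z, y + a∘η) − t(z, y) ≤ t(a, y + a∘η) − t(a, y). -/
open Finset

/-- The difference-type statistic. -/
def tstat (n : ℕ) (ψ1 ψ0 : Fin n → ℝ → ℝ) (z y : Fin n → ℝ) : ℝ :=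
  ∑ i, z i * ψ1 i (y i) - ∑ i, (1 - z i) * ψ0 i (y i)

/-- the difference-type statistic with monotone score functions is
differential increasing. -/
theorem stmt1 (n : ℕ) (ψ1 ψ0 : Fin n → ℝ → ℝ)
    (h1 : ∀ i, Monotone (ψ1 i)) (h0 : ∀ i, Monotone (ψ0 i))
    (z a y η : Fin n → ℝ)
    (hz : ∀ i, z i = 0 ∨ z i = 1) (ha : ∀ i, a i = 0 ∨ a i = 1)
    (hη : ∀ i, 0 ≤ η i) :
    tstat n ψ1 ψ0 z (fun i => y i + a i * η i) - tstat n ψ1 ψ0 z y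
      ≤ tstat n ψ1 ψ0 a (fun i => y i + a i * η i) - tstat n ψ1 ψ0 a y := by
  have key : ∀ w : Fin n → ℝ,
      tstat n ψ1 ψ0 w (fun i => y i + a i * η i) - tstat n ψ1 ψ0 w y
        = ∑ i, (w i * (ψ1 i (y i + a i * η i) - ψ1 i (y i))
            - (1 - w i) * (ψ0 i (y i + a i * η i) - ψ0 i (y i))) := by
    intro w
    simp only [tstat]
    rw [show ∀ A B C D : ℝ, A - B - (C - D) = (A - C) - (B - D) from fun _ _ _ _ => by ring,
      ← Finset.sum_sub_distrib, ← Finset.sum_sub_distrib, ← Finset.sum_sub_distrib]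
    exact Finset.sum_congr rfl fun i _ => by ring
  rw [key, key]
  refine Finset.sum_le_sum fun i _ => ?_
  rcases ha i with h | h
  · simp [h]
  · simp only [h, one_mul]
    have hΔ1 : 0 ≤ ψ1 i (y i + 1 * η i) - ψ1 i (y i) := by
      have := h1 i (by linarith [hη i] : y i ≤ y i + 1 * η i); linarith
    have hΔ0 : 0 ≤ ψ0 i (y i + 1 * η i) - ψ0 i (y i) := by
      have := h0 i (by linarith [hη i] : y i ≤ y i + 1 * η i); linarith
    simp only [one_mul] at hΔ1 hΔ0
    rcases hz i with hzi | hzi <;> simp [hzi] <;> linarith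
end

section
/- Let r_i(·) be the rank function on ℝ^n with 'first' method tie-breaking, let φ : ℕ → ℝ be monotone increasing, and define the rank sum statistic t(z, y) = Σ_{i=1}^n z_i φ(r_i(y)). Then t is effect increasing: for all z ∈ {0,1}^n and y, η, ξ ∈ ℝ^n with η ≥ 0 ≥ ξ coordinatewise, t(z, y + z∘η + (1−z)∘ξ) ≥ t(z, y). -/
open Finset

/-- Rank with the "first" method for ties. -/
noncomputable def rankFirst (n : ℕ) (y : Fin n → ℝ) (i : Fin n) : ℕ :=
  (Finset.univ.filter fun j => y j < y i).card +
  (Finset.univ.filter fun j => y j = y i ∧ j ≤ i).card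

/-!
Breaking ties by index makes `rankFirst` the rank of `(y i, i)` in a strict total order. Writing
`φ r = φ 0 + ∑_{k < r} (φ (k + 1) - φ k)`, the statistic becomes
`#T • φ 0 + ∑_k #{i ∈ T | k < r i} • (φ (k + 1) - φ k)` with `T` the treated units, so it suffices
that for every `k` the number of treated units among the `k` lowest ranks does not grow.
The shift can make treated units overtake controls but never the reverse. If a control `j` among
the `k` lowest before the shift leaves them, every treated unit among the `k` lowest afterwards
was below `j`, hence among the `k` lowest before. Otherwise the controls among the `k` lowest
can only gain members; as both sets of `k` lowest have size `min k n`, the treated ones can only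
lose members.
-/

section LayerCake

variable {ι M : Type*}

theorem sum_comp_eq_card_nsmul_add_sum_card_filter_lt [AddCommGroup M] (φ : ℕ → M)
    (s : Finset ι) (f : ι → ℕ) {N : ℕ} (hf : ∀ i ∈ s, f i ≤ N) :
    ∑ i ∈ s, φ (f i) = #s • φ 0 + ∑ k ∈ range N, #{i ∈ s | k < f i} • (φ (k + 1) - φ k) := by
  have telescope : ∀ m ≤ N,
      φ m = φ 0 + ∑ k ∈ range N, if k < m then φ (k + 1) - φ k else 0 := by
    intro m hm
    rw [← sum_filter, show {k ∈ range N | k < m} = range m by ext; simp; omega,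
      sum_range_sub, add_sub_cancel]
  calc ∑ i ∈ s, φ (f i)
      = ∑ i ∈ s, (φ 0 + ∑ k ∈ range N, if k < f i then φ (k + 1) - φ k else 0) :=
        sum_congr rfl fun i hi => telescope (f i) (hf i hi)
    _ = #s • φ 0 + ∑ k ∈ range N, ∑ i ∈ s, if k < f i then φ (k + 1) - φ k else 0 := by
        rw [sum_add_distrib, sum_const, sum_comm]
    _ = _ := by simp only [← sum_filter, sum_const]

theorem sum_comp_le_sum_comp_of_card_filter_le [AddCommGroup M] [PartialOrder M]
    [IsOrderedAddMonoid M] {φ : ℕ → M} (hφ : Monotone φ) {s : Finset ι} {f g : ι → ℕ}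
    (h : ∀ k, #{i ∈ s | g i ≤ k} ≤ #{i ∈ s | f i ≤ k}) :
    ∑ i ∈ s, φ (f i) ≤ ∑ i ∈ s, φ (g i) := by
  have card_add_card (u : ι → ℕ) (k : ℕ) : #{i ∈ s | u i ≤ k} + #{i ∈ s | k < u i} = #s := by
    simpa only [not_le] using card_filter_add_card_filter_not (s := s) fun i => u i ≤ k
  have hf (i) (hi : i ∈ s) : f i ≤ s.sup f ⊔ s.sup g := le_sup_of_le_left (le_sup hi)
  have hg (i) (hi : i ∈ s) : g i ≤ s.sup f ⊔ s.sup g := le_sup_of_le_right (le_sup hi)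
  rw [sum_comp_eq_card_nsmul_add_sum_card_filter_lt φ s f hf,
    sum_comp_eq_card_nsmul_add_sum_card_filter_lt φ s g hg]
  refine (add_le_add_iff_left _).2 (sum_le_sum fun k _ =>
    nsmul_le_nsmul_left (sub_nonneg.2 (hφ (Nat.le_succ k))) ?_)
  have := h k
  have := card_add_card f k
  have := card_add_card g k
  omega

end LayerCake

section Rank

variable {ι α : Type*} [Fintype ι] [LinearOrder α] {w w' : ι → α} {i j : ι}

noncomputable def rank (w : ι → α) (i : ι) : ℕ := #{j | w j ≤ w i}

theorem rank_lt_rank_of_lt (h : w i < w j) : rank w i < rank w j := by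
  refine card_lt_card ⟨fun x hx => ?_, fun hsub => ?_⟩
  · simp only [mem_filter, mem_univ, true_and] at hx ⊢
    exact hx.trans h.le
  · exact h.not_ge (by simpa using hsub (mem_filter.2 ⟨mem_univ j, le_rfl⟩))

theorem rank_le_rank_iff : rank w i ≤ rank w j ↔ w i ≤ w j := by
  refine ⟨fun h => not_lt.1 fun hlt => (rank_lt_rank_of_lt hlt).not_ge h, fun h => ?_⟩
  refine card_le_card fun x hx => ?_
  simp only [mem_filter, mem_univ, true_and] at hx ⊢
  exact hx.trans h

theorem rank_lt_rank_iff : rank w i < rank w j ↔ w i < w j := by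
  simpa only [not_le] using rank_le_rank_iff.not

theorem rank_injective (hw : Function.Injective w) : Function.Injective (rank w) :=
  fun _ _ h => hw (le_antisymm (rank_le_rank_iff.1 h.le) (rank_le_rank_iff.1 h.ge))

theorem image_rank (hw : Function.Injective w) :
    univ.image (rank w) = Icc 1 (Fintype.card ι) := by
  refine eq_of_subset_of_card_le (fun r hr => ?_) ?_
  · obtain ⟨i, -, rfl⟩ := mem_image.1 hr
    exact mem_Icc.2 ⟨card_pos.2 ⟨i, by simp⟩, card_filter_le _ _⟩
  · simp [card_image_of_injective _ (rank_injective hw)]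

theorem card_rank_le (hw : Function.Injective w) (k : ℕ) :
    #{i | rank w i ≤ k} = min k (Fintype.card ι) := by
  rw [← card_image_of_injective _ (rank_injective hw),
    show ({i | rank w i ≤ k} : Finset ι).image (rank w) = {r ∈ univ.image (rank w) | r ≤ k} by
      rw [filter_image], image_rank hw,
    show {r ∈ Icc 1 (Fintype.card ι) | r ≤ k} = Icc 1 (min k (Fintype.card ι)) by
      ext; simp; omega]
  simp

theorem card_filter_rank_le_le (hw : Function.Injective w) (hw' : Function.Injective w')
    (T : Finset ι) (hT : ∀ i ∈ T, ∀ j ∉ T, w j ≤ w i → w' j ≤ w' i) (k : ℕ) :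
    #{i ∈ T | rank w' i ≤ k} ≤ #{i ∈ T | rank w i ≤ k} := by
  classical
  by_cases hTc : ∀ j ∉ T, rank w j ≤ k → rank w' j ≤ k
  · have card_add_card (v : ι → α) (hv : Function.Injective v) :
        #{i ∈ T | rank v i ≤ k} + #{i ∈ Tᶜ | rank v i ≤ k} = min k (Fintype.card ι) := by
      rw [← card_rank_le hv, ← card_union_of_disjoint (disjoint_filter_filter disjoint_compl_right),
        ← filter_union, union_compl]
    have : #{i ∈ Tᶜ | rank w i ≤ k} ≤ #{i ∈ Tᶜ | rank w' i ≤ k} := by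
      refine card_le_card fun j hj => ?_
      simp only [mem_filter, mem_compl] at hj ⊢
      exact ⟨hj.1, hTc j hj.1 hj.2⟩
    have := card_add_card w hw
    have := card_add_card w' hw'
    omega
  · push Not at hTc
    obtain ⟨j, hjT, hjk, hj'k⟩ := hTc
    refine card_le_card fun i hi => ?_
    simp only [mem_filter] at hi ⊢
    have hw'ij : w' i < w' j := rank_lt_rank_iff.1 (by omega)
    have hwij : w i < w j := lt_of_not_ge fun h => (hT i hi.1 j hjT h).not_gt hw'ij
    exact ⟨hi.1, (rank_lt_rank_iff.2 hwij).le.trans hjk⟩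

end Rank

section RankFirst

variable {n : ℕ}

def lexWithIndex (y : Fin n → ℝ) (i : Fin n) : ℝ ×ₗ Fin n := toLex (y i, i)

theorem lexWithIndex_injective (y : Fin n → ℝ) : Function.Injective (lexWithIndex y) :=
  fun i j h => by simpa [lexWithIndex] using congrArg (fun p => (ofLex p).2) h

theorem lexWithIndex_le_lexWithIndex {y y' : Fin n → ℝ} {i : Fin n} (h : y i ≤ y' i) :
    lexWithIndex y i ≤ lexWithIndex y' i :=
  Prod.Lex.toLex_mono ⟨h, le_rfl⟩

theorem rankFirst_eq_rank (y : Fin n → ℝ) : rankFirst n y = rank (lexWithIndex y) := by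
  funext i
  rw [rankFirst, rank, ← card_union_of_disjoint]
  · congr 1
    ext j
    simp [lexWithIndex, Prod.Lex.le_iff]
  · exact disjoint_filter.2 fun j _ hlt heq => hlt.ne heq.1

end RankFirst

/-- the rank sum statistic with a monotone score function is effect increasing. -/
theorem stmt4 (n : ℕ) (φ : ℕ → ℝ) (hφ : Monotone φ)
    (z y η ξ : Fin n → ℝ) (hz : ∀ i, z i = 0 ∨ z i = 1)
    (hη : ∀ i, 0 ≤ η i) (hξ : ∀ i, ξ i ≤ 0) :
    ∑ i, z i * φ (rankFirst n y i)
      ≤ ∑ i, z i * φ (rankFirst n (fun j => y j + z j * η j + (1 - z j) * ξ j) i) := by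
  set y' : Fin n → ℝ := fun j => y j + z j * η j + (1 - z j) * ξ j
  set T : Finset (Fin n) := {i | z i = 1}
  have statistic_eq (u : Fin n → ℝ) :
      ∑ i, z i * φ (rankFirst n u i) = ∑ i ∈ T, φ (rank (lexWithIndex u) i) := by
    rw [sum_filter, rankFirst_eq_rank]
    refine sum_congr rfl fun i _ => ?_
    rcases hz i with h | h <;> simp [h]
  rw [statistic_eq, statistic_eq]
  refine sum_comp_le_sum_comp_of_card_filter_le hφ fun k => card_filter_rank_le_le
    (lexWithIndex_injective y) (lexWithIndex_injective y') T (fun i hi j hj hji => ?_) k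
  have hzi : z i = 1 := by simpa [T] using hi
  have hzj : z j = 0 := (hz j).resolve_right (by simpa [T] using hj)
  have hyi : y i ≤ y' i := by simp only [y', hzi]; linarith [hη i]
  have hyj : y' j ≤ y j := by simp only [y', hzj]; linarith [hξ j]
  exact (lexWithIndex_le_lexWithIndex hyj).trans (hji.trans (lexWithIndex_le_lexWithIndex hyi))
end

section
/- Let z ∈ {0,1}^n, y, w ∈ ℝ^n satisfy w_i ≥ y_i for all i with z_i = 1 and w_i ≤ y_i for all i with z_i = 0. Let m = Σ z_i, and let i_1,...,i_m (resp. j_1,...,j_m) enumerate the treated indices {i : z_i = 1} in increasing order of r_{i_k}(y) (resp. r_{j_k}(w)), using ranks with 'first' tie-breaking. Then for every k ∈ {1,...,m}, r_{j_k}(w) ≥ r_{i_k}(y); that is, the k-th smallest treated rank under w is at least the k-th smallest treated rank under y. -/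
open Finset Function

section OrderStatistics

variable {ι β : Type*} [LinearOrder β]

theorem Finset.card_filter_le_sort_getElem (s : Finset β) {k : ℕ}
    (hk : k < (s.sort (· ≤ ·)).length) : #{b ∈ s | b ≤ (s.sort (· ≤ ·))[k]} = k + 1 := by
  rw [length_sort] at hk
  let e := s.orderEmbOfFin rfl
  have hfilter : {b ∈ s | b ≤ e ⟨k, hk⟩} = (Iic ⟨k, hk⟩).map e.toEmbedding := by
    ext b
    constructor
    · intro hb
      obtain ⟨l, rfl⟩ : b ∈ Set.range e := by rw [range_orderEmbOfFin]; exact (mem_filter.1 hb).1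
      exact mem_map_of_mem _ (mem_Iic.2 (e.le_iff_le.1 (mem_filter.1 hb).2))
    · simp only [mem_map, mem_Iic]
      rintro ⟨l, hl, rfl⟩
      exact mem_filter.2 ⟨orderEmbOfFin_mem _ _ _, e.monotone hl⟩
  change #{b ∈ s | b ≤ e ⟨k, hk⟩} = k + 1
  rw [hfilter, card_map, Fin.card_Iic]

theorem Finset.exists_mem_sort_image_getD_eq [DecidableEq β] {s : Finset ι}
    {f : ι → β} (hf : Set.InjOn f s) {k : ℕ} (hk : k < #s) (d : β) :
    ∃ i ∈ s, #{a ∈ s | f a ≤ f i} = k + 1 ∧ ((s.image f).sort (· ≤ ·)).getD k d = f i := by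
  have hk' : k < ((s.image f).sort (· ≤ ·)).length := by
    rwa [length_sort, card_image_of_injOn hf]
  obtain ⟨i, hi, hfi⟩ := mem_image.1 ((mem_sort _).1 (List.getElem_mem hk'))
  refine ⟨i, hi, ?_, by rw [List.getD_eq_getElem _ _ hk', hfi]⟩
  rw [← card_image_of_injOn (hf.mono (filter_subset _ _)), ← filter_image (p := (· ≤ f i)), hfi]
  exact card_filter_le_sort_getElem _ hk'

theorem Finset.exists_mem_le_and_le_of_card_filter_le {s : Finset ι} {f g : ι → β} {i j : ι}
    (hi : i ∈ s) (h : #{a ∈ s | f a ≤ f i} ≤ #{a ∈ s | g a ≤ g j}) :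
    ∃ x ∈ s, f i ≤ f x ∧ g x ≤ g j := by
  have hlt : #{a ∈ s | f a < f i} < #{a ∈ s | g a ≤ g j} := by
    refine (card_lt_card ⟨monotone_filter_right s fun a _ ha => ha.le, fun hsub => ?_⟩).trans_le h
    exact lt_irrefl _ (mem_filter.1 (hsub (mem_filter.2 ⟨hi, le_rfl⟩))).2
  obtain ⟨x, hx, hxf⟩ := exists_mem_notMem_of_card_lt_card hlt
  rw [mem_filter] at hx hxf
  exact ⟨x, hx.1, not_lt.1 fun h => hxf ⟨hx.1, h⟩, hx.2⟩

theorem Finset.card_filter_le_le_card_filter_le_iff [Fintype ι] {key : ι → β} {i j : ι} :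
    #{a | key a ≤ key i} ≤ #{a | key a ≤ key j} ↔ key i ≤ key j := by
  refine ⟨fun h => not_lt.1 fun hji => h.not_gt (card_lt_card ⟨?_, fun hsub => ?_⟩),
    fun h => card_le_card (monotone_filter_right _ fun a _ ha => ha.trans h)⟩
  · exact monotone_filter_right _ fun a _ ha => ha.trans hji.le
  · exact hji.not_ge (mem_filter.1 (hsub (mem_filter.2 ⟨mem_univ i, le_rfl⟩))).2

end OrderStatistics

section Rank

variable {n : ℕ}

def lexKey (v : Fin n → ℝ) (i : Fin n) : ℝ ×ₗ Fin n := toLex (v i, i)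

theorem rankFirst_eq_card_lexKey_le (v : Fin n → ℝ) (i : Fin n) :
    rankFirst n v i = #{j | lexKey v j ≤ lexKey v i} := by
  simp only [rankFirst, lexKey, Prod.Lex.toLex_le_toLex]
  rw [filter_or, card_union_of_disjoint (disjoint_filter.2 fun a _ h1 h2 => h1.ne h2.1)]

theorem rankFirst_le_rankFirst_iff {v : Fin n → ℝ} {i j : Fin n} :
    rankFirst n v i ≤ rankFirst n v j ↔ lexKey v i ≤ lexKey v j := by
  simp only [rankFirst_eq_card_lexKey_le]
  exact card_filter_le_le_card_filter_le_iff

theorem rankFirst_injective (v : Fin n → ℝ) : Injective (rankFirst n v) := fun _ _ h =>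
  congrArg (fun p => (ofLex p).2)
    (le_antisymm (rankFirst_le_rankFirst_iff.1 h.le) (rankFirst_le_rankFirst_iff.1 h.ge))

theorem rankFirst_eq_card_filter_add_card_filter (s : Finset (Fin n)) (v : Fin n → ℝ)
    (i : Fin n) :
    rankFirst n v i = #{a ∈ s | rankFirst n v a ≤ rankFirst n v i}
      + #{a ∈ sᶜ | rankFirst n v a ≤ rankFirst n v i} := by
  conv_lhs => rw [rankFirst_eq_card_lexKey_le]
  simp only [← rankFirst_le_rankFirst_iff]
  rw [← card_filter_add_card_filter_not (· ∈ s), filter_filter, filter_filter]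
  congr 2 <;> ext a <;> simp [and_comm]

end Rank

section Treatment

variable {n : ℕ} {y w : Fin n → ℝ} {T : Finset (Fin n)}

theorem rankFirst_le_rankFirst_of_notMem_of_mem (hT : ∀ i ∈ T, y i ≤ w i)
    (hTc : ∀ i ∉ T, w i ≤ y i) {c x : Fin n} (hc : c ∉ T) (hx : x ∈ T)
    (h : rankFirst n y c ≤ rankFirst n y x) : rankFirst n w c ≤ rankFirst n w x := by
  rw [rankFirst_le_rankFirst_iff] at h ⊢
  calc lexKey w c ≤ lexKey y c := Prod.Lex.toLex_mono ⟨hTc c hc, le_rfl⟩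
    _ ≤ lexKey y x := h
    _ ≤ lexKey w x := Prod.Lex.toLex_mono ⟨hT x hx, le_rfl⟩

theorem rankFirst_le_rankFirst_of_card_filter_le (hT : ∀ i ∈ T, y i ≤ w i)
    (hTc : ∀ i ∉ T, w i ≤ y i) {i j x : Fin n} (hx : x ∈ T)
    (hix : rankFirst n y i ≤ rankFirst n y x) (hxj : rankFirst n w x ≤ rankFirst n w j)
    (hcard : #{a ∈ T | rankFirst n y a ≤ rankFirst n y i}
      ≤ #{a ∈ T | rankFirst n w a ≤ rankFirst n w j}) :
    rankFirst n y i ≤ rankFirst n w j := by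
  rw [rankFirst_eq_card_filter_add_card_filter T y i,
    rankFirst_eq_card_filter_add_card_filter T w j]
  refine add_le_add hcard (card_le_card (monotone_filter_right _ fun c hc hci => ?_))
  exact (rankFirst_le_rankFirst_of_notMem_of_mem hT hTc (mem_compl.1 hc) hx (hci.trans hix)).trans
    hxj

end Treatment

/-- if treated outcomes weakly increase and control outcomes weakly
decrease, then each sorted treated rank weakly increases. -/
theorem stmt5 (n : ℕ) (z y w : Fin n → ℝ) (hz : ∀ i, z i = 0 ∨ z i = 1)
    (hw1 : ∀ i, z i = 1 → y i ≤ w i) (hw0 : ∀ i, z i = 0 → w i ≤ y i) :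
    ∀ k < (Finset.univ.filter fun i => z i = 1).card,
      (Finset.sort
          (((Finset.univ.filter fun i => z i = 1)).image (rankFirst n y)) (· ≤ ·)).getD k 0
        ≤ (Finset.sort
          (((Finset.univ.filter fun i => z i = 1)).image (rankFirst n w)) (· ≤ ·)).getD k 0 := by
  intro k hk
  obtain ⟨i, hi, hik, hi_eq⟩ :=
    exists_mem_sort_image_getD_eq (rankFirst_injective y).injOn hk 0
  obtain ⟨j, -, hjk, hj_eq⟩ :=
    exists_mem_sort_image_getD_eq (rankFirst_injective w).injOn hk 0
  have hcard := (hik.trans hjk.symm).le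
  obtain ⟨x, hx, hix, hxj⟩ := exists_mem_le_and_le_of_card_filter_le hi hcard
  rw [hi_eq, hj_eq]
  refine rankFirst_le_rankFirst_of_card_filter_le (fun a ha => hw1 a (mem_filter.1 ha).2)
    (fun a ha => hw0 a ?_) hx hix hxj hcard
  exact (hz a).resolve_right fun h => ha (mem_filter.2 ⟨mem_univ a, h⟩)
end

section
/- Consider a finite population of n units with fixed potential outcomes Y(1), Y(0) ∈ ℝ^n and effects τ = Y(1) − Y(0). Let Z be a random assignment on a finite set 𝒵 ⊂ {0,1}^n, let Y = Z∘Y(1) + (1−Z)∘Y(0), and for δ ∈ ℝ^n define the imputed control outcomes Y_{Z,δ}(0) = Y − Z∘δ and the randomization p-value p_{Z,δ} = Σ_{a∈𝒵} P(A=a)·1{t(a, Y_{Z,δ}(0)) ≥ t(Z, Y_{Z,δ}(0))}, where A is an independent copy of Z. If t is effect increasing, then under the bounded null τ ≤ δ (coordinatewise), p_{Z,δ} is a valid p-value: P(p_{Z,δ} ≤ α) ≤ α for all α ∈ [0,1]. -/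
open Finset

/-- Generic validity of randomization p-values: for any nonnegative weights `P`
and any function `g`, the mass of points whose p-value `q z = ∑_{a : g z ≤ g a} P a`
is at most `α` is itself at most `α`. -/
lemma key_valid {V : Type*} [DecidableEq V] (𝒵 : Finset V) (P : V → ℝ)
    (hP0 : ∀ z, 0 ≤ P z) (g : V → ℝ) (α : ℝ) (hα : 0 ≤ α) :
    (∑ z ∈ 𝒵, if (∑ a ∈ 𝒵, if g z ≤ g a then P a else 0) ≤ α then P z else 0) ≤ α := by
  classical
  set q : V → ℝ := fun z => ∑ a ∈ 𝒵, if g z ≤ g a then P a else 0 with hq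
  have hrw : (∑ z ∈ 𝒵, if q z ≤ α then P z else 0)
      = ∑ z ∈ 𝒵.filter (fun z => q z ≤ α), P z := (Finset.sum_filter _ _).symm
  rw [hrw]
  by_cases hS : (𝒵.filter (fun z => q z ≤ α)).Nonempty
  · obtain ⟨z0, hz0, hmin⟩ := Finset.exists_min_image _ g hS
    have hz0' := Finset.mem_filter.mp hz0
    have hsub : 𝒵.filter (fun z => q z ≤ α) ⊆ 𝒵.filter (fun a => g z0 ≤ g a) := by
      intro z hz
      exact Finset.mem_filter.mpr ⟨(Finset.mem_filter.mp hz).1, hmin z hz⟩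
    calc ∑ z ∈ 𝒵.filter (fun z => q z ≤ α), P z
        ≤ ∑ z ∈ 𝒵.filter (fun a => g z0 ≤ g a), P z :=
          Finset.sum_le_sum_of_subset_of_nonneg hsub (fun i _ _ => hP0 i)
      _ = q z0 := Finset.sum_filter _ _
      _ ≤ α := hz0'.2
  · rw [Finset.not_nonempty_iff_eq_empty.mp hS, Finset.sum_empty]
    exact hα

/-- if the test statistic is effect increasing, then the randomization
p-value for the sharp null `τ = δ` is valid for the bounded null `τ ≤ δ`. -/
theorem stmt7 (n : ℕ) (Y1 Y0 : Fin n → ℝ)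
    (𝒵 : Finset (Fin n → ℝ)) (hbin : ∀ z ∈ 𝒵, ∀ i, z i = 0 ∨ z i = 1)
    (P : (Fin n → ℝ) → ℝ) (hP0 : ∀ z, 0 ≤ P z) (hP1 : ∑ z ∈ 𝒵, P z = 1)
    (t : (Fin n → ℝ) → (Fin n → ℝ) → ℝ)
    (ht : ∀ z : Fin n → ℝ, (∀ i, z i = 0 ∨ z i = 1) →
      ∀ (y η ξ : Fin n → ℝ), (∀ i, 0 ≤ η i) → (∀ i, ξ i ≤ 0) →
        t z y ≤ t z (fun i => y i + z i * η i + (1 - z i) * ξ i))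
    (δ : Fin n → ℝ) (hnull : ∀ i, Y1 i - Y0 i ≤ δ i) :
    ∀ α ∈ Set.Icc (0:ℝ) 1,
      (∑ z ∈ 𝒵, if
          (∑ a ∈ 𝒵, if t z (fun i => z i * Y1 i + (1 - z i) * Y0 i - z i * δ i)
              ≤ t a (fun i => z i * Y1 i + (1 - z i) * Y0 i - z i * δ i)
            then P a else 0) ≤ α
        then P z else 0) ≤ α := by
  classical
  intro α hα
  -- imputed outcomes and the sharp-null statistic
  set y : (Fin n → ℝ) → (Fin n → ℝ) :=
    fun z i => z i * Y1 i + (1 - z i) * Y0 i - z i * δ i with hy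
  set g : (Fin n → ℝ) → ℝ := fun z => t z (y z) with hg
  -- key monotonicity: for binary a, z, t(a, y a) ≤ t(a, y z)
  have hmono : ∀ a ∈ 𝒵, ∀ z ∈ 𝒵, t a (y a) ≤ t a (y z) := by
    intro a ha z hz
    have hηξ := ht a (hbin a ha) (y a)
      (fun i => (1 - z i) * (δ i - (Y1 i - Y0 i)))
      (fun i => z i * ((Y1 i - Y0 i) - δ i))
      (fun i => by
        rcases hbin z hz i with h | h <;> rw [h] <;> nlinarith [hnull i])
      (fun i => by
        rcases hbin z hz i with h | h <;> rw [h] <;> nlinarith [hnull i])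
    have heq : (fun i => y a i + a i * ((1 - z i) * (δ i - (Y1 i - Y0 i)))
        + (1 - a i) * (z i * ((Y1 i - Y0 i) - δ i))) = y z := by
      funext i
      rcases hbin a ha i with h | h <;> simp only [hy] <;> rw [h] <;> ring
    rwa [heq] at hηξ
  -- the bounded-null p-value dominates the sharp-null p-value q
  have hdom : ∀ z ∈ 𝒵,
      (∑ a ∈ 𝒵, if g z ≤ g a then P a else 0)
        ≤ ∑ a ∈ 𝒵, if t z (y z) ≤ t a (y z) then P a else 0 := by
    intro z hz
    apply Finset.sum_le_sum
    intro a ha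
    by_cases h : g z ≤ g a
    · rw [if_pos h, if_pos (h.trans (hmono a ha z hz))]
    · rw [if_neg h]
      split <;> [exact hP0 a; exact le_refl 0]
  -- hence the event {p ≤ α} is contained in {q ≤ α}
  have hstep : (∑ z ∈ 𝒵, if
      (∑ a ∈ 𝒵, if t z (y z) ≤ t a (y z) then P a else 0) ≤ α then P z else 0)
      ≤ ∑ z ∈ 𝒵, if (∑ a ∈ 𝒵, if g z ≤ g a then P a else 0) ≤ α then P z else 0 := by
    apply Finset.sum_le_sum
    intro z hz
    by_cases h : (∑ a ∈ 𝒵, if t z (y z) ≤ t a (y z) then P a else 0) ≤ α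
    · rw [if_pos h, if_pos ((hdom z hz).trans h)]
    · rw [if_neg h]
      split <;> [exact hP0 z; exact le_refl 0]
  exact hstep.trans (key_valid 𝒵 P hP0 g α hα.1)
end

section
/- In the finite-population randomization setting with effects τ ≤ δ coordinatewise, if the test statistic t is differential increasing, then for every assignment a ∈ 𝒵: t(a, Y_{Z,δ}(0)) − t(Z, Y_{Z,δ}(0)) ≥ t(a, Y(0)) − t(Z, Y(0)), where Y_{Z,δ}(0) = Y − Z∘δ and Y = Z∘Y(1) + (1−Z)∘Y(0). Consequently the randomization p-value p_{Z,δ} is bounded below by the tail probability of the true randomization distribution of t(·, Y(0)) evaluated at t(Z, Y(0)), and is therefore a valid p-value for the bounded null τ ≤ δ. -/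
open Finset

/-- if the test statistic is differential increasing, then under the
bounded null `τ ≤ δ` the randomization p-value dominates the tail probability of the
true randomization distribution of `t(·, Y(0))`, and it is a valid p-value. -/
theorem stmt8 (n : ℕ) (Y1 Y0 : Fin n → ℝ)
    (𝒵 : Finset (Fin n → ℝ)) (hbin : ∀ z ∈ 𝒵, ∀ i, z i = 0 ∨ z i = 1)
    (P : (Fin n → ℝ) → ℝ) (hP0 : ∀ z, 0 ≤ P z) (hP1 : ∑ z ∈ 𝒵, P z = 1)
    (t : (Fin n → ℝ) → (Fin n → ℝ) → ℝ)
    (ht : ∀ z a : Fin n → ℝ, (∀ i, z i = 0 ∨ z i = 1) → (∀ i, a i = 0 ∨ a i = 1) →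
      ∀ (y η : Fin n → ℝ), (∀ i, 0 ≤ η i) →
        t z (fun i => y i + a i * η i) - t z y ≤ t a (fun i => y i + a i * η i) - t a y)
    (δ : Fin n → ℝ) (hnull : ∀ i, Y1 i - Y0 i ≤ δ i) :
    (∀ z ∈ 𝒵, ∀ a ∈ 𝒵,
      t a Y0 - t z Y0
        ≤ t a (fun i => z i * Y1 i + (1 - z i) * Y0 i - z i * δ i)
            - t z (fun i => z i * Y1 i + (1 - z i) * Y0 i - z i * δ i)) ∧
    (∀ z ∈ 𝒵,
      (∑ a ∈ 𝒵, if t z Y0 ≤ t a Y0 then P a else 0)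
        ≤ ∑ a ∈ 𝒵, if t z (fun i => z i * Y1 i + (1 - z i) * Y0 i - z i * δ i)
              ≤ t a (fun i => z i * Y1 i + (1 - z i) * Y0 i - z i * δ i)
            then P a else 0) ∧
    (∀ α ∈ Set.Icc (0:ℝ) 1,
      (∑ z ∈ 𝒵, if
          (∑ a ∈ 𝒵, if t z (fun i => z i * Y1 i + (1 - z i) * Y0 i - z i * δ i)
              ≤ t a (fun i => z i * Y1 i + (1 - z i) * Y0 i - z i * δ i)
            then P a else 0) ≤ α
        then P z else 0) ≤ α) := by
  have key : ∀ z ∈ 𝒵, ∀ a ∈ 𝒵,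
      t a Y0 - t z Y0
        ≤ t a (fun i => z i * Y1 i + (1 - z i) * Y0 i - z i * δ i)
            - t z (fun i => z i * Y1 i + (1 - z i) * Y0 i - z i * δ i) := by
    intro z hz a ha
    have hη : ∀ i, 0 ≤ δ i - (Y1 i - Y0 i) := fun i => by linarith [hnull i]
    have h := ht a z (hbin a ha) (hbin z hz)
      (fun i => z i * Y1 i + (1 - z i) * Y0 i - z i * δ i)
      (fun i => δ i - (Y1 i - Y0 i)) hη
    have heq : (fun i => (z i * Y1 i + (1 - z i) * Y0 i - z i * δ i)
        + z i * (δ i - (Y1 i - Y0 i))) = Y0 := by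
      funext i; ring
    rw [heq] at h
    linarith
  have key2 : ∀ z ∈ 𝒵,
      (∑ a ∈ 𝒵, if t z Y0 ≤ t a Y0 then P a else 0)
        ≤ ∑ a ∈ 𝒵, if t z (fun i => z i * Y1 i + (1 - z i) * Y0 i - z i * δ i)
              ≤ t a (fun i => z i * Y1 i + (1 - z i) * Y0 i - z i * δ i)
            then P a else 0 := by
    intro z hz
    apply Finset.sum_le_sum
    intro a ha
    by_cases h : t z Y0 ≤ t a Y0
    · rw [if_pos h, if_pos (by have := key z hz a ha; linarith)]
    · rw [if_neg h]
      split_ifs with h2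
      · exact hP0 a
      · exact le_refl _
  refine ⟨key, key2, ?_⟩
  intro α hα
  obtain ⟨hα0, hα1⟩ := hα
  -- reduce to the true p-value
  set p0 : (Fin n → ℝ) → ℝ := fun z => ∑ a ∈ 𝒵, if t z Y0 ≤ t a Y0 then P a else 0 with hp0
  have step1 : (∑ z ∈ 𝒵, if
          (∑ a ∈ 𝒵, if t z (fun i => z i * Y1 i + (1 - z i) * Y0 i - z i * δ i)
              ≤ t a (fun i => z i * Y1 i + (1 - z i) * Y0 i - z i * δ i)
            then P a else 0) ≤ α
        then P z else 0) ≤ ∑ z ∈ 𝒵, if p0 z ≤ α then P z else 0 := by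
    apply Finset.sum_le_sum
    intro z hz
    split_ifs with h1 h2
    · exact le_refl _
    · exact absurd (le_trans (key2 z hz) h1) h2
    · exact hP0 z
    · exact le_refl _
  refine le_trans step1 ?_
  rw [← Finset.sum_filter]
  set S := 𝒵.filter (fun z => p0 z ≤ α) with hS
  rcases S.eq_empty_or_nonempty with hE | hNE
  · rw [hE]; simpa using hα0
  · obtain ⟨z₀, hz₀S, hz₀min⟩ := S.exists_min_image (fun z => t z Y0) hNE
    have hz₀Z : z₀ ∈ 𝒵 := (Finset.mem_filter.mp hz₀S).1
    have hz₀p : p0 z₀ ≤ α := (Finset.mem_filter.mp hz₀S).2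
    have hsub : S ⊆ 𝒵.filter (fun a => t z₀ Y0 ≤ t a Y0) := by
      intro a haS
      exact Finset.mem_filter.mpr ⟨(Finset.mem_filter.mp haS).1, hz₀min a haS⟩
    calc ∑ z ∈ S, P z ≤ ∑ a ∈ 𝒵.filter (fun a => t z₀ Y0 ≤ t a Y0), P a :=
          Finset.sum_le_sum_of_subset_of_nonneg hsub (fun a _ _ => hP0 a)
      _ = p0 z₀ := by rw [hp0, Finset.sum_filter]
      _ ≤ α := hz₀p
end

section
/- If the test statistic t is differential increasing, then for every fixed assignment z ∈ 𝒵, the randomization p-value p_{z,δ} = Σ_{a∈𝒵} P(A=a)·1{t(a, Y_{z,δ}(0)) ≥ t(z, Y_{z,δ}(0))} is monotone increasing in δ: for any δ ≤ δ' coordinatewise, p_{z,δ} ≤ p_{z,δ'}. -/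
open Finset

/-- for a differential increasing statistic, the randomization p-value
at a fixed assignment is monotone increasing in `δ`. -/
theorem stmt9 (n : ℕ) (Y z : Fin n → ℝ) (hz : ∀ i, z i = 0 ∨ z i = 1)
    (𝒵 : Finset (Fin n → ℝ)) (hbin : ∀ a ∈ 𝒵, ∀ i, a i = 0 ∨ a i = 1)
    (P : (Fin n → ℝ) → ℝ) (hP0 : ∀ a, 0 ≤ P a)
    (t : (Fin n → ℝ) → (Fin n → ℝ) → ℝ)
    (ht : ∀ w a : Fin n → ℝ, (∀ i, w i = 0 ∨ w i = 1) → (∀ i, a i = 0 ∨ a i = 1) →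
      ∀ (y η : Fin n → ℝ), (∀ i, 0 ≤ η i) →
        t w (fun i => y i + a i * η i) - t w y ≤ t a (fun i => y i + a i * η i) - t a y)
    (δ δ' : Fin n → ℝ) (hδ : ∀ i, δ i ≤ δ' i) :
    (∑ a ∈ 𝒵, if t z (fun i => Y i - z i * δ i) ≤ t a (fun i => Y i - z i * δ i)
        then P a else 0)
      ≤ ∑ a ∈ 𝒵, if t z (fun i => Y i - z i * δ' i) ≤ t a (fun i => Y i - z i * δ' i)
          then P a else 0 := by
  apply Finset.sum_le_sum
  intro a ha
  by_cases h : t z (fun i => Y i - z i * δ i) ≤ t a (fun i => Y i - z i * δ i)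
  · rw [if_pos h]
    have key := ht a z (hbin a ha) hz (fun i => Y i - z i * δ' i)
      (fun i => δ' i - δ i) (fun i => sub_nonneg.2 (hδ i))
    have he : (fun i => (Y i - z i * δ' i) + z i * (δ' i - δ i))
        = fun i => Y i - z i * δ i := by funext i; ring
    rw [he] at key
    have : t z (fun i => Y i - z i * δ' i) ≤ t a (fun i => Y i - z i * δ' i) := by
      linarith
    rw [if_pos this]
  · rw [if_neg h]
    split <;> simp [hP0 a]
end

section
/- If the test statistic t is effect increasing and distribution free (i.e., the distribution of t(A, y) over A ∼ P does not depend on y), then for every fixed assignment z, the randomization p-value p_{z,δ} is monotone increasing in δ: δ ≤ δ' coordinatewise implies p_{z,δ} ≤ p_{z,δ'}. -/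
open Finset

/-- for an effect increasing and distribution free statistic, the
randomization p-value at a fixed assignment is monotone increasing in `δ`. -/
theorem stmt10 (n : ℕ) (Y z : Fin n → ℝ) (hz : ∀ i, z i = 0 ∨ z i = 1)
    (𝒵 : Finset (Fin n → ℝ)) (hbin : ∀ a ∈ 𝒵, ∀ i, a i = 0 ∨ a i = 1)
    (P : (Fin n → ℝ) → ℝ) (hP0 : ∀ a, 0 ≤ P a)
    (t : (Fin n → ℝ) → (Fin n → ℝ) → ℝ)
    (heff : ∀ w : Fin n → ℝ, (∀ i, w i = 0 ∨ w i = 1) →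
      ∀ (y η ξ : Fin n → ℝ), (∀ i, 0 ≤ η i) → (∀ i, ξ i ≤ 0) →
        t w y ≤ t w (fun i => y i + w i * η i + (1 - w i) * ξ i))
    (hdf : ∀ (y y' : Fin n → ℝ) (c : ℝ),
      (∑ a ∈ 𝒵, if c ≤ t a y then P a else 0)
        = ∑ a ∈ 𝒵, if c ≤ t a y' then P a else 0)
    (δ δ' : Fin n → ℝ) (hδ : ∀ i, δ i ≤ δ' i) :
    (∑ a ∈ 𝒵, if t z (fun i => Y i - z i * δ i) ≤ t a (fun i => Y i - z i * δ i)
        then P a else 0)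
      ≤ ∑ a ∈ 𝒵, if t z (fun i => Y i - z i * δ' i) ≤ t a (fun i => Y i - z i * δ' i)
          then P a else 0 := by
  have hc : t z (fun i => Y i - z i * δ' i) ≤ t z (fun i => Y i - z i * δ i) := by
    have h := heff z hz (fun i => Y i - z i * δ' i) (fun i => δ' i - δ i) (fun _ => 0)
      (fun i => sub_nonneg.mpr (hδ i)) (fun i => le_refl 0)
    have : (fun i => (Y i - z i * δ' i) + z i * (δ' i - δ i) + (1 - z i) * 0)
        = (fun i => Y i - z i * δ i) := by funext i; ring
    rwa [this] at h
  calc (∑ a ∈ 𝒵, if t z (fun i => Y i - z i * δ i) ≤ t a (fun i => Y i - z i * δ i)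
        then P a else 0)
      = ∑ a ∈ 𝒵, if t z (fun i => Y i - z i * δ i) ≤ t a (fun i => Y i - z i * δ' i)
        then P a else 0 := hdf _ _ _
    _ ≤ ∑ a ∈ 𝒵, if t z (fun i => Y i - z i * δ' i) ≤ t a (fun i => Y i - z i * δ' i)
        then P a else 0 := by
        apply Finset.sum_le_sum
        intro a _
        by_cases h : t z (fun i => Y i - z i * δ i) ≤ t a (fun i => Y i - z i * δ' i)
        · rw [if_pos h, if_pos (le_trans hc h)]
        · rw [if_neg h]; split <;> [exact hP0 a; exact le_refl 0]
end

section
/- Fix z ∈ {0,1}^n with m = Σ z_i treated units, y ∈ ℝ^n, 1 ≤ k ≤ n, and let l = min(n−k, m). Let I_k ⊆ {i : z_i = 1} be the set of treated indices with the l largest ranks r_i(y) (ties broken by 'first' method), and define ξ ∈ (ℝ ∪ {∞})^n by ξ_i = ∞ for i ∈ I_k and ξ_i = 0 otherwise. Then for any rank score statistic t(z, y) = Σ_i z_i φ(r_i(y)) with φ monotone increasing, the infimum over δ ∈ H_{k,0} = {δ ∈ ℝ^n : δ_{(k)} ≤ 0} of t(z, y − z∘δ) equals t(z, y − z∘ξ),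 and this value equals Σ_{i=1}^l φ(i) + Σ_{p=1}^{m−l} φ(r_p + l), where r_1 < ... < r_m are the sorted treated ranks of y. -/
/-!
Ranks under the "first" rule are ranks for the lexicographic order on (value, index).
Sending the `l` treated units of `Ik` to `⊥` gives them the ranks `1, …, l` and raises every
other treated rank by exactly `l`, because all of `Ik` lies above the rest of `T`; this is the
closed form, and a large finite shift of the same units reproduces these ranks, so the infimum
is attained. Conversely, if at most `l` treated outcomes are lowered, take the unlowered treated
unit in the bottom `c` of the new ranking that is highest in the old one: counting the controls
below it shows that at most `l + #{i ∈ T | r_i(y) ≤ c - l}` treated units land in the bottom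
`c`. Hence the `q`-th smallest new treated rank is at least `q + 1`, and at least `r_{q-l} + l`
for `q ≥ l`, and the monotonicity of `φ` gives the lower bound.
-/

open Finset

/-- Rank with the "first" method for ties, for extended-real outcome vectors. -/
noncomputable def rankE (n : ℕ) (v : Fin n → EReal) (i : Fin n) : ℕ :=
  (Finset.univ.filter fun j => v j < v i).card +
  (Finset.univ.filter fun j => v j = v i ∧ j ≤ i).card

namespace Finset

variable {α : Type*} [LinearOrder α] {S : Finset α} {q : ℕ}

lemma getD_sort_eq_orderEmbOfFin (d : α) (hq : q < #S) :
    (S.sort (· ≤ ·)).getD q d = S.orderEmbOfFin rfl ⟨q, hq⟩ := by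
  rw [orderEmbOfFin_apply, List.getD_eq_getElem _ _ (by simpa using hq)]
  rfl

lemma mem_iff_exists_orderEmbOfFin {x : α} : x ∈ S ↔ ∃ i, S.orderEmbOfFin rfl i = x := by
  rw [← Set.mem_range, range_orderEmbOfFin, mem_coe]

lemma sum_range_card_getD_sort {M : Type*} [AddCommMonoid M] (S : Finset α) (d : α)
    (f : α → M) : ∑ q ∈ range #S, f ((S.sort (· ≤ ·)).getD q d) = ∑ x ∈ S, f x := by
  rw [← Fin.sum_univ_eq_sum_range (fun q => f ((S.sort (· ≤ ·)).getD q d))]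
  conv_rhs => rw [← map_orderEmbOfFin_univ S rfl, sum_map]
  exact sum_congr rfl fun i _ => by rw [getD_sort_eq_orderEmbOfFin d i.2]; rfl

lemma getD_sort_mem (d : α) (hq : q < #S) : (S.sort (· ≤ ·)).getD q d ∈ S := by
  rw [getD_sort_eq_orderEmbOfFin d hq]
  exact orderEmbOfFin_mem S rfl _

lemma card_filter_lt_getD_sort (d : α) (hq : q < #S) :
    #{x ∈ S | x < (S.sort (· ≤ ·)).getD q d} = q := by
  rw [getD_sort_eq_orderEmbOfFin d hq]
  set e := S.orderEmbOfFin rfl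
  have : {x ∈ S | x < e ⟨q, hq⟩} = (Iio ⟨q, hq⟩).map e.toEmbedding := by
    ext x
    rw [mem_filter, mem_map, mem_iff_exists_orderEmbOfFin]
    constructor
    · rintro ⟨⟨i, rfl⟩, h⟩
      exact ⟨i, mem_Iio.mpr (e.lt_iff_lt.mp h), rfl⟩
    · rintro ⟨i, h, rfl⟩
      exact ⟨⟨i, rfl⟩, e.lt_iff_lt.mpr (mem_Iio.mp h)⟩
  rw [this, card_map, Fin.card_Iio]

lemma getD_sort_le_iff (d : α) (hq : q < #S) (c : α) :
    (S.sort (· ≤ ·)).getD q d ≤ c ↔ q < #{x ∈ S | x ≤ c} := by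
  set a := (S.sort (· ≤ ·)).getD q d
  have hlt : #{x ∈ S | x < a} = q := card_filter_lt_getD_sort d hq
  constructor
  · intro h
    refine hlt ▸ card_lt_card ⟨fun x hx => ?_, fun hsub => ?_⟩
    · simp only [mem_filter] at hx ⊢; exact ⟨hx.1, hx.2.le.trans h⟩
    · exact lt_irrefl a (mem_filter.mp (hsub (mem_filter.mpr ⟨getD_sort_mem d hq, h⟩))).2
  · intro h
    by_contra hc
    have : #{x ∈ S | x ≤ c} ≤ #{x ∈ S | x < a} := card_le_card fun x hx => by
      simp only [mem_filter] at hx ⊢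
      exact ⟨hx.1, hx.2.trans_lt (not_le.mp hc)⟩
    omega

lemma sum_range_card_getD_sort_of_initial {M : Type*} [AddCommMonoid M] {A S : Finset α}
    (hAS : A ⊆ S) (hlt : ∀ a ∈ A, ∀ b ∈ S, b ∉ A → a < b) (d : α) (f : α → M) :
    ∑ p ∈ range #A, f ((S.sort (· ≤ ·)).getD p d) = ∑ x ∈ A, f x := by
  classical
  have hAS' : #A ≤ #S := card_le_card hAS
  have hinj : Set.InjOn (fun p => (S.sort (· ≤ ·)).getD p d) (range #A) :=
    fun p hp p' hp' h => by
    have hp : p < #S := (mem_range.mp hp).trans_le hAS'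
    have hp' : p' < #S := (mem_range.mp hp').trans_le hAS'
    simp only [getD_sort_eq_orderEmbOfFin d hp, getD_sort_eq_orderEmbOfFin d hp'] at h
    exact congrArg Fin.val ((S.orderEmbOfFin rfl).injective h)
  have himage : (range #A).image (fun p => (S.sort (· ≤ ·)).getD p d) = A := by
    refine eq_of_subset_of_card_le (fun x hx => ?_) (by rw [card_image_of_injOn hinj, card_range])
    obtain ⟨p, hp, rfl⟩ := mem_image.mp hx
    have hpS : p < #S := (mem_range.mp hp).trans_le hAS'
    by_contra hnot
    have : #A ≤ #{x ∈ S | x < (S.sort (· ≤ ·)).getD p d} :=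
      card_le_card fun a ha => mem_filter.mpr ⟨hAS ha, hlt a ha _ (getD_sort_mem d hpS) hnot⟩
    rw [card_filter_lt_getD_sort d hpS] at this
    exact (mem_range.mp hp).not_ge this
  rw [← sum_image hinj, himage]

lemma card_filter_le_add_sub {ι : Type*} {R : ι → ℕ} (hR : Function.Injective R)
    (s : Finset ι) (a b : ℕ) : #{i ∈ s | R i ≤ b} ≤ #{i ∈ s | R i ≤ a} + (b - a) := by
  classical
  have hmid : #{i ∈ s | a < R i ∧ R i ≤ b} ≤ b - a := by
    simpa using card_le_card_of_injOn (t := Ioc a b) R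
      (fun i hi => by simpa using (mem_filter.mp hi).2) hR.injOn
  calc #{i ∈ s | R i ≤ b}
      ≤ #({i ∈ s | R i ≤ a} ∪ {i ∈ s | a < R i ∧ R i ≤ b}) :=
        card_le_card fun i hi => by
          obtain ⟨his, hib⟩ := mem_filter.mp hi
          by_cases h : R i ≤ a
          exacts [mem_union_left _ (mem_filter.mpr ⟨his, h⟩),
            mem_union_right _ (mem_filter.mpr ⟨his, not_le.mp h, hib⟩)]
    _ ≤ #{i ∈ s | R i ≤ a} + (b - a) := (card_union_le _ _).trans (by omega)

lemma card_filter_le_le_of_zero_notMem {S : Finset ℕ} (h0 : 0 ∉ S) (c : ℕ) :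
    #{x ∈ S | x ≤ c} ≤ c := by
  simpa using card_le_card (t := Icc 1 c) fun x hx => by
    obtain ⟨hxS, hxc⟩ := mem_filter.mp hx
    exact mem_Icc.mpr ⟨Nat.one_le_iff_ne_zero.mpr (ne_of_mem_of_not_mem hxS h0), hxc⟩

lemma sum_Icc_add_sum_range_getD_sort_le {M : Type*} [AddCommMonoid M] [PartialOrder M]
    [IsOrderedAddMonoid M] {φ : ℕ → M} (hφ : Monotone φ) {S S' : Finset ℕ}
    (hcard : #S' = #S) (h0 : 0 ∉ S') {l : ℕ} (hl : l ≤ #S)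
    (hshift : ∀ c, #{x ∈ S' | x ≤ c} ≤ l + #{x ∈ S | x ≤ c - l}) :
    ∑ t ∈ Icc 1 l, φ t + ∑ p ∈ range (#S - l), φ ((S.sort (· ≤ ·)).getD p 0 + l)
      ≤ ∑ x ∈ S', φ x := by
  set r := fun p => (S.sort (· ≤ ·)).getD p 0
  set r' := fun q => (S'.sort (· ≤ ·)).getD q 0
  have hlow : ∀ q < l, q + 1 ≤ r' q := fun q hq => by
    by_contra! h
    have := (getD_sort_le_iff 0 (by omega) q).mp (Nat.lt_succ_iff.mp h)
    have := card_filter_le_le_of_zero_notMem h0 q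
    omega
  have hhigh : ∀ p < #S - l, r p + l ≤ r' (l + p) := fun p hp => by
    by_contra! h
    set c := r' (l + p)
    have h1 := (getD_sort_le_iff (S := S') 0 (by omega) c).mp le_rfl
    have h2 := (getD_sort_le_iff (S := S) 0 (by omega : p < #S) (c - l)).mpr
    have := hshift c
    have := card_filter_le_le_of_zero_notMem h0 c
    simp only [r] at h
    omega
  calc ∑ t ∈ Icc 1 l, φ t + ∑ p ∈ range (#S - l), φ (r p + l)
      = ∑ q ∈ range l, φ (q + 1) + ∑ p ∈ range (#S - l), φ (r p + l) := by
        rw [← Ico_add_one_right_eq_Icc, sum_Ico_eq_sum_range, Nat.add_sub_cancel]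
        simp only [add_comm 1]
    _ ≤ ∑ q ∈ range l, φ (r' q) + ∑ p ∈ range (#S - l), φ (r' (l + p)) :=
        add_le_add (sum_le_sum fun q hq => hφ (hlow q (mem_range.mp hq)))
          (sum_le_sum fun p hp => hφ (hhigh p (mem_range.mp hp)))
    _ = ∑ x ∈ S', φ x := by
        rw [← sum_range_add, Nat.add_sub_cancel' hl, ← hcard]
        exact sum_range_card_getD_sort S' 0 φ

end Finset

section Rank

variable {n : ℕ}

def rankKey (v : Fin n → EReal) (i : Fin n) : EReal ×ₗ Fin n := toLex (v i, i)

lemma rankE_eq_card_rankKey_le (v : Fin n → EReal) (i : Fin n) :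
    rankE n v i = #{j | rankKey v j ≤ rankKey v i} := by
  simp only [rankE, rankKey, Prod.Lex.toLex_le_toLex]
  rw [filter_or, card_union_of_disjoint (disjoint_filter.mpr fun j _ hlt heq => hlt.ne heq.1)]

lemma rankKey_injective (v : Fin n → EReal) : Function.Injective (rankKey v) :=
  fun _ _ h => (Prod.ext_iff.mp (toLex.injective h)).2

variable {v : Fin n → EReal} {i j : Fin n}

lemma rankE_le_rankE_of_rankKey_le (h : rankKey v i ≤ rankKey v j) :
    rankE n v i ≤ rankE n v j := by
  simp only [rankE_eq_card_rankKey_le]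
  exact card_le_card fun x hx => by simp only [mem_filter] at hx ⊢; exact ⟨hx.1, hx.2.trans h⟩

lemma rankE_lt_rankE_of_rankKey_lt (h : rankKey v i < rankKey v j) :
    rankE n v i < rankE n v j := by
  simp only [rankE_eq_card_rankKey_le]
  refine card_lt_card ⟨fun x hx => ?_, fun hsub => ?_⟩
  · simp only [mem_filter] at hx ⊢; exact ⟨hx.1, hx.2.trans h.le⟩
  · exact h.not_ge (mem_filter.mp (hsub (mem_filter.mpr ⟨mem_univ j, le_rfl⟩))).2

lemma rankE_le_rankE_iff : rankE n v i ≤ rankE n v j ↔ rankKey v i ≤ rankKey v j :=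
  ⟨fun h => not_lt.mp fun h' => (rankE_lt_rankE_of_rankKey_lt h').not_ge h,
    rankE_le_rankE_of_rankKey_le⟩

lemma rankE_injective (v : Fin n → EReal) : Function.Injective (rankE n v) := fun _ _ h =>
  rankKey_injective v (le_antisymm (rankE_le_rankE_iff.mp h.le) (rankE_le_rankE_iff.mp h.ge))

lemma one_le_rankE (v : Fin n → EReal) (i : Fin n) : 1 ≤ rankE n v i := by
  rw [rankE_eq_card_rankKey_le]
  exact card_pos.mpr ⟨i, mem_filter.mpr ⟨mem_univ i, le_rfl⟩⟩

lemma rankE_eq_card_rankE_le (v : Fin n → EReal) (i : Fin n) :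
    rankE n v i = #{j | rankE n v j ≤ rankE n v i} := by
  simp only [rankE_le_rankE_iff]
  exact rankE_eq_card_rankKey_le v i

lemma card_filter_rankE_le_le (v : Fin n → EReal) (s : Finset (Fin n)) (c : ℕ) :
    #{i ∈ s | rankE n v i ≤ c} ≤ c := by
  have h0 : #{i ∈ s | rankE n v i ≤ 0} = 0 :=
    card_eq_zero.mpr (filter_false_of_mem fun i _ => Nat.not_le.mpr (one_le_rankE v i))
  have := card_filter_le_add_sub (rankE_injective v) s 0 c
  omega

lemma rankE_congr {w : Fin n → EReal} (h : ∀ i j, v i ≤ v j ↔ w i ≤ w j) :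
    rankE n v = rankE n w := by
  funext i
  simp only [rankE, lt_iff_le_not_ge, le_antisymm_iff, h]

lemma rankE_le_rankE_of_le {u : Fin n → EReal} (hj : u j ≤ v j) (hi : v i ≤ u i)
    (h : rankE n v j ≤ rankE n v i) : rankE n u j ≤ rankE n u i := by
  rw [rankE_le_rankE_iff, rankKey, rankKey, Prod.Lex.toLex_le_toLex] at h ⊢
  rcases h with h | ⟨h, hji⟩
  · exact Or.inl (hj.trans_lt (h.trans_le hi))
  · rcases (hj.trans (h.trans_le hi)).lt_or_eq with h' | h'
    exacts [Or.inl h', Or.inr ⟨h', hji⟩]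

lemma card_filter_image_rankE (v : Fin n → EReal) (T : Finset (Fin n)) (c : ℕ) :
    #{x ∈ T.image (rankE n v) | x ≤ c} = #{i ∈ T | rankE n v i ≤ c} := by
  rw [filter_image, card_image_of_injective _ (rankE_injective v)]

lemma card_filter_rankE_le_le_add {u y : Fin n → EReal} {T D : Finset (Fin n)} {l : ℕ}
    (hD : #D ≤ l) (hctrl : ∀ j ∉ T, u j = y j) (hup : ∀ i ∈ T, i ∉ D → y i ≤ u i)
    (c : ℕ) :
    #{i ∈ T | rankE n u i ≤ c} ≤ l + #{i ∈ T | rankE n y i ≤ c - l} := by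
  set W := {i ∈ T | rankE n u i ≤ c}
  rcases (W \ D).eq_empty_or_nonempty with hempty | hne
  · have := card_le_card (sdiff_eq_empty_iff_subset.mp hempty)
    omega
  obtain ⟨s, hs, hmax⟩ := exists_max_image (W \ D) (rankE n y) hne
  obtain ⟨hsW, hsD⟩ := mem_sdiff.mp hs
  obtain ⟨hsT, hsc⟩ := mem_filter.mp hsW
  set R := rankE n y s
  set X := {j ∈ Tᶜ | rankE n y j ≤ R}
  have hWD : #(W \ D) ≤ #{i ∈ T | rankE n y i ≤ R} := card_le_card fun i hi =>
    mem_filter.mpr ⟨(mem_filter.mp (mem_sdiff.mp hi).1).1, hmax i hi⟩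
  -- controls below `s` in `y` stay below `s` in `u`, so they join `W` in the bottom `c` of `u`
  have hWX : #W + #X ≤ c := by
    rw [← card_union_of_disjoint (disjoint_filter_filter (disjoint_compl_right))]
    refine le_trans (card_le_card fun j hj => ?_) (card_filter_rankE_le_le u univ c)
    refine mem_filter.mpr ⟨mem_univ j, ?_⟩
    rcases mem_union.mp hj with hj | hj
    · exact (mem_filter.mp hj).2
    · obtain ⟨hjT, hjR⟩ := mem_filter.mp hj
      exact (rankE_le_rankE_of_le (hctrl j (mem_compl.mp hjT)).le (hup s hsT hsD) hjR).trans hsc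
  have hR : R = #{i ∈ T | rankE n y i ≤ R} + #X := by
    rw [← card_union_of_disjoint (disjoint_filter_filter (disjoint_compl_right)),
      ← filter_union, union_compl]
    exact rankE_eq_card_rankE_le y s
  have hgap := card_filter_le_add_sub (rankE_injective y) T (c - l) R
  have := card_le_card_sdiff_add_card (s := W) (t := D)
  -- if `R ≤ c - l` then `hWD` suffices, otherwise `hWX`, `hR` and `hgap`
  omega

lemma sum_Icc_add_sum_range_le_sum_rankE {M : Type*} [AddCommMonoid M] [PartialOrder M]
    [IsOrderedAddMonoid M] {φ : ℕ → M} (hφ : Monotone φ) {u y : Fin n → EReal}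
    {T : Finset (Fin n)} {l : ℕ} (hl : l ≤ #T)
    (hshift : ∀ c, #{i ∈ T | rankE n u i ≤ c} ≤ l + #{i ∈ T | rankE n y i ≤ c - l}) :
    ∑ t ∈ Icc 1 l, φ t + ∑ p ∈ range (#T - l),
        φ ((Finset.sort (T.image (rankE n y)) (· ≤ ·)).getD p 0 + l)
      ≤ ∑ i ∈ T, φ (rankE n u i) := by
  have hcard : ∀ v, #(T.image (rankE n v)) = #T := fun v =>
    card_image_of_injective _ (rankE_injective v)
  rw [← sum_image (rankE_injective u).injOn, ← hcard y]
  refine sum_Icc_add_sum_range_getD_sort_le hφ (by rw [hcard, hcard]) ?_ (by rwa [hcard]) ?_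
  · simpa using fun i _ => (Nat.one_le_iff_ne_zero.mp (one_le_rankE u i))
  · simpa only [card_filter_image_rankE] using hshift

/-- Ties among the units of `Ik` are broken by index both at `⊥` and at a common finite value
below all of `y`. -/
lemma exists_rankE_sub_eq_rankE_bot (y : Fin n → ℝ) {T Ik : Finset (Fin n)} (hIkT : Ik ⊆ T) :
    ∃ δ : Fin n → ℝ, ({i | 0 < δ i} : Finset (Fin n)) ⊆ Ik ∧
      rankE n (fun j => (((y j - if j ∈ T then δ j else 0 : ℝ)) : EReal))
        = rankE n (fun j => if j ∈ Ik then (⊥ : EReal) else (y j : EReal)) := by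
  set M : ℝ := -∑ j, |y j| - 1
  have hM : ∀ j, M < y j := fun j => by
    have := single_le_sum (fun i _ => abs_nonneg (y i)) (mem_univ j)
    linarith [neg_abs_le (y j)]
  refine ⟨fun j => if j ∈ Ik then y j - M else 0, fun j hj => ?_, rankE_congr fun i j => ?_⟩
  · by_contra hjIk
    simp [hjIk] at hj
  · have hval : ∀ j, (y j - if j ∈ T then (if j ∈ Ik then y j - M else 0) else 0)
        = if j ∈ Ik then M else y j := fun j => by
      by_cases hj : j ∈ Ik
      · simp [hj, hIkT hj]
      · by_cases hjT : j ∈ T <;> simp [hj, hjT]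
    simp only [hval]
    by_cases hi : i ∈ Ik <;> by_cases hj : j ∈ Ik <;> simp [hi, hj, hM i, (hM j).le]

end Rank

section ClosedForm

variable {n : ℕ} {T Ik : Finset (Fin n)} {y : Fin n → ℝ}

lemma image_rankE_bot_eq_Icc :
    Ik.image (rankE n (fun j => if j ∈ Ik then (⊥ : EReal) else (y j : EReal)))
      = Icc 1 #Ik := by
  set w : Fin n → EReal := fun j => if j ∈ Ik then ⊥ else (y j : EReal)
  refine eq_of_subset_of_card_le (fun x hx => ?_) ?_
  · obtain ⟨i, hi, rfl⟩ := mem_image.mp hx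
    refine mem_Icc.mpr ⟨one_le_rankE w i, ?_⟩
    rw [rankE_eq_card_rankKey_le]
    refine card_le_card fun j hj => ?_
    have hwj : w j ≤ w i := Prod.Lex.monotone_fst _ _ (mem_filter.mp hj).2
    by_contra hjIk
    simp [w, hi, hjIk] at hwj
  · rw [card_image_of_injective _ (rankE_injective w), Nat.card_Icc, Nat.add_sub_cancel]

lemma rankE_bot_of_mem_sdiff
    (hIktop : ∀ i ∈ Ik, ∀ j ∈ T \ Ik,
      rankE n (fun i => ((y i : EReal))) j < rankE n (fun i => ((y i : EReal))) i)
    {i : Fin n} (hi : i ∈ T \ Ik) :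
    rankE n (fun j => if j ∈ Ik then (⊥ : EReal) else (y j : EReal)) i
      = rankE n (fun i => ((y i : EReal))) i + #Ik := by
  set w : Fin n → EReal := fun j => if j ∈ Ik then ⊥ else (y j : EReal)
  set v : Fin n → EReal := fun j => (y j : EReal)
  have hiIk := (mem_sdiff.mp hi).2
  have hbelow : ∀ j ∈ Ik, ¬ rankKey v j ≤ rankKey v i := fun j hj h =>
    (hIktop j hj i hi).not_ge (rankE_le_rankE_iff.mpr h)
  have hsplit : ({j | rankKey w j ≤ rankKey w i} : Finset (Fin n))
      = Ik ∪ ({j | rankKey v j ≤ rankKey v i} : Finset (Fin n)) := by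
    ext j
    by_cases hj : j ∈ Ik
    · simp [rankKey, w, hj, hiIk, Prod.Lex.toLex_le_toLex]
    · simp only [mem_union, mem_filter, mem_univ, true_and, hj, false_or]
      simp [rankKey, w, v, hj, hiIk]
  rw [rankE_eq_card_rankKey_le, hsplit, card_union_of_disjoint, add_comm,
    ← rankE_eq_card_rankKey_le]
  exact disjoint_left.mpr fun j hj hj' => hbelow j hj (mem_filter.mp hj').2

lemma sum_rankE_bot_eq {M : Type*} [AddCommMonoid M] (φ : ℕ → M) (hIkT : Ik ⊆ T)
    (hIktop : ∀ i ∈ Ik, ∀ j ∈ T \ Ik,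
      rankE n (fun i => ((y i : EReal))) j < rankE n (fun i => ((y i : EReal))) i) :
    ∑ i ∈ T, φ (rankE n (fun j => if j ∈ Ik then (⊥ : EReal) else (y j : EReal)) i)
      = ∑ t ∈ Icc 1 #Ik, φ t + ∑ p ∈ range (#T - #Ik),
          φ ((Finset.sort (T.image (rankE n (fun i => ((y i : EReal))))) (· ≤ ·)).getD p 0
            + #Ik) := by
  set v : Fin n → EReal := fun i => (y i : EReal)
  have hcard : #((T \ Ik).image (rankE n v)) = #T - #Ik := by
    rw [card_image_of_injective _ (rankE_injective v), card_sdiff_of_subset hIkT]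
  have hinitial : ∀ a ∈ (T \ Ik).image (rankE n v), ∀ b ∈ T.image (rankE n v),
      b ∉ (T \ Ik).image (rankE n v) → a < b := by
    rintro _ ha b hb hbA
    obtain ⟨i, hi, rfl⟩ := mem_image.mp ha
    obtain ⟨j, hjT, rfl⟩ := mem_image.mp hb
    have hj : j ∈ Ik := by
      by_contra hj
      exact hbA (mem_image_of_mem _ (mem_sdiff.mpr ⟨hjT, hj⟩))
    exact hIktop j hj i hi
  rw [← sum_sdiff hIkT, add_comm, ← image_rankE_bot_eq_Icc (y := y) (Ik := Ik),
    sum_image (rankE_injective _).injOn, ← hcard,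
    sum_range_card_getD_sort_of_initial (image_subset_image sdiff_subset) hinitial 0
      (fun x => φ (x + #Ik)),
    sum_image (rankE_injective v).injOn]
  exact congrArg _ (sum_congr rfl fun i hi => by rw [rankE_bot_of_mem_sdiff hIktop hi])

end ClosedForm

theorem stmt12_general (n k : ℕ)
    (T : Finset (Fin n)) (y : Fin n → ℝ) (φ : ℕ → ℝ) (hφ : Monotone φ)
    (Ik : Finset (Fin n)) (hIkT : Ik ⊆ T)
    (hIkcard : Ik.card = min (n - k) T.card)
    (hIktop : ∀ i ∈ Ik, ∀ j ∈ T \ Ik,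
      rankE n (fun i => ((y i : EReal))) j < rankE n (fun i => ((y i : EReal))) i) :
    sInf {r : ℝ | ∃ δ : Fin n → ℝ,
        (Finset.univ.filter fun i => 0 < δ i).card ≤ n - k ∧
        r = ∑ i ∈ T, φ (rankE n
              (fun j => (((y j - if j ∈ T then δ j else 0 : ℝ)) : EReal)) i)}
      = ∑ i ∈ T, φ (rankE n (fun j => if j ∈ Ik then (⊥ : EReal) else (y j : EReal)) i)
    ∧ (∑ i ∈ T, φ (rankE n (fun j => if j ∈ Ik then (⊥ : EReal) else (y j : EReal)) i))
      = (∑ i ∈ Finset.Icc 1 (min (n - k) T.card), φ i)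
        + ∑ p ∈ Finset.range (T.card - min (n - k) T.card),
            φ ((Finset.sort
                  (T.image (rankE n (fun i => ((y i : EReal))))) (· ≤ ·)).getD p 0
                + min (n - k) T.card) := by
  have hclosed := sum_rankE_bot_eq φ hIkT hIktop
  rw [hIkcard] at hclosed
  refine ⟨IsLeast.csInf_eq ⟨?_, ?_⟩, hclosed⟩
  · obtain ⟨δ, hδIk, hδ⟩ := exists_rankE_sub_eq_rankE_bot y hIkT
    exact ⟨δ, (card_le_card hδIk).trans (hIkcard.trans_le (min_le_left _ _)), by rw [hδ]⟩
  · rintro _ ⟨δ, hδ, rfl⟩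
    rw [hclosed]
    refine sum_Icc_add_sum_range_le_sum_rankE hφ (min_le_right _ _)
      (card_filter_rankE_le_le_add (D := {i ∈ T | 0 < δ i}) ?_ (fun j hj => by simp [hj]) ?_)
    · exact le_min ((card_le_card (filter_subset_filter _ (subset_univ T))).trans hδ)
        (card_filter_le _ _)
    · intro i hi hiD
      have : δ i ≤ 0 := not_lt.mp fun h => hiD (mem_filter.mpr ⟨hi, h⟩)
      simp only [hi, if_true]
      exact EReal.coe_le_coe_iff.mpr (by linarith)

/-- the infimum of the rank score statistic over the null region
`H_{k,0}` is attained by sending the effects of the treated units with the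
`l = min(n−k, m)` largest outcomes to `∞`, and equals the closed form
`Σ_{i=1}^l φ(i) + Σ_{p=1}^{m−l} φ(r_p + l)`. -/
theorem stmt12 (n k : ℕ) (hk1 : 1 ≤ k) (hkn : k ≤ n)
    (T : Finset (Fin n)) (y : Fin n → ℝ) (φ : ℕ → ℝ) (hφ : Monotone φ)
    (Ik : Finset (Fin n)) (hIkT : Ik ⊆ T)
    (hIkcard : Ik.card = min (n - k) T.card)
    (hIktop : ∀ i ∈ Ik, ∀ j ∈ T \ Ik,
      rankE n (fun i => ((y i : EReal))) j < rankE n (fun i => ((y i : EReal))) i) :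
    sInf {r : ℝ | ∃ δ : Fin n → ℝ,
        (Finset.univ.filter fun i => 0 < δ i).card ≤ n - k ∧
        r = ∑ i ∈ T, φ (rankE n
              (fun j => (((y j - if j ∈ T then δ j else 0 : ℝ)) : EReal)) i)}
      = ∑ i ∈ T, φ (rankE n (fun j => if j ∈ Ik then (⊥ : EReal) else (y j : EReal)) i)
    ∧ (∑ i ∈ T, φ (rankE n (fun j => if j ∈ Ik then (⊥ : EReal) else (y j : EReal)) i))
      = (∑ i ∈ Finset.Icc 1 (min (n - k) T.card), φ i)
        + ∑ p ∈ Finset.range (T.card - min (n - k) T.card),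
            φ ((Finset.sort
                  (T.image (rankE n (fun i => ((y i : EReal))))) (· ≤ ·)).getD p 0
                + min (n - k) T.card) :=
  stmt12_general n k T y φ hφ Ik hIkT hIkcard hIktop
end

section
/- Simultaneous validity: suppose for each pair (k, c) with 1 ≤ k ≤ n and c ∈ ℝ, p_{Z,k,c} = sup_{δ ∈ H_{k,c}} p_{Z,δ}, where p_{Z,τ} is a valid p-value at the true effect vector τ (P(p_{Z,τ} ≤ α) ≤ α). Then the confidence set ⋂_{(k,c): p_{Z,k,c} ≤ α} (H_{k,c})^∁ covers τ with probability at least 1 − α: P(τ ∈ ⋂_{(k,c): p_{Z,k,c} ≤ α} H_{k,c}^∁) ≥ 1 − α. In particular, the 1−α confidence intervals for all quantiles τ_(k) obtained by inverting these tests are simultaneously valid without multiplicity correction. -/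
/-
If τ lies in some `H_{k,c}` with `p_{Z,k,c} ≤ α`, then `p_{Z,τ} ≤ sup_{δ ∈ H_{k,c}} p_{Z,δ} ≤ α`.
So non-coverage of τ is contained in the event `p_{Z,τ} ≤ α`, whose probability is at most `α`
by validity of the p-value at τ.
-/

open Finset

/-- The `k`-th smallest coordinate (`k` is 1-indexed) of a vector in `ℝ^n`. -/
noncomputable def orderStat (n : ℕ) (τ : Fin n → ℝ) (k : ℕ) : ℝ :=
  (Multiset.sort (Multiset.map τ Finset.univ.val) (· ≤ ·)).getD (k - 1) 0

theorem apply_le_of_sSup_image_le {α : Type*} {f : α → ℝ} {s : Set α} {x : α} {a : ℝ}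
    (hf : BddAbove (Set.range f)) (hx : x ∈ s) (h : sSup (f '' s) ≤ a) : f x ≤ a :=
  (le_csSup (hf.mono (Set.image_subset_range f s)) (Set.mem_image_of_mem f hx)).trans h

-- `B` is decided classically, matching the `if` in `stmt18`, so the lemma applies there verbatim.
open Classical in
theorem one_sub_le_sum_ite_of_not_imp {ι : Type*} [Fintype ι] {P : ι → ℝ}
    (hP0 : ∀ i, 0 ≤ P i) (hP1 : ∑ i, P i = 1) {A B : ι → Prop} [DecidablePred A] {α : ℝ}
    (hA : (∑ i, if A i then P i else 0) ≤ α) (hBA : ∀ i, ¬ B i → A i) :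
    1 - α ≤ ∑ i, if B i then P i else 0 := by
  rw [← Finset.sum_filter] at hA ⊢
  have hsplit := Finset.sum_filter_add_sum_filter_not univ A P
  have hsub : univ.filter (fun i => ¬ A i) ⊆ univ.filter B := fun i hi => by
    simp only [Finset.mem_filter, Finset.mem_univ, true_and] at hi ⊢
    exact not_not.mp (mt (hBA i) hi)
  have hmono := Finset.sum_le_sum_of_subset_of_nonneg hsub fun i _ _ => hP0 i
  linarith

open Classical in
/-- simultaneous validity — the intersection over all `(k, c)` with
`p_{Z,k,c} ≤ α` of the complements of `H_{k,c}` covers the true effect vector `τ`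
with probability at least `1 − α`. -/
theorem stmt18 (n : ℕ) {𝒵 : Type*} [Fintype 𝒵] (P : 𝒵 → ℝ)
    (hP0 : ∀ z, 0 ≤ P z) (hP1 : ∑ z, P z = 1)
    (p : 𝒵 → (Fin n → ℝ) → ℝ) (hp : ∀ z δ, p z δ ∈ Set.Icc (0:ℝ) 1)
    (τ : Fin n → ℝ)
    (hvalid : ∀ α ∈ Set.Icc (0:ℝ) 1, (∑ z, if p z τ ≤ α then P z else 0) ≤ α) :
    ∀ α ∈ Set.Icc (0:ℝ) 1,
      1 - α ≤ ∑ z, if (∀ k, 1 ≤ k → k ≤ n → ∀ c : ℝ,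
          sSup (p z '' {δ | orderStat n δ k ≤ c}) ≤ α → ¬ (orderStat n τ k ≤ c))
        then P z else 0 := by
  intro α hα
  refine one_sub_le_sum_ite_of_not_imp hP0 hP1 (hvalid α hα) fun z hz => ?_
  push Not at hz
  obtain ⟨k, -, -, c, hsup, hτ⟩ := hz
  have hbdd : BddAbove (Set.range (p z)) := ⟨1, Set.forall_mem_range.mpr fun δ => (hp z δ).2⟩
  exact apply_le_of_sSup_image_le hbdd hτ hsup
end
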